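/- Let ε > 0 and let x_k ∈ ℝ^N with |x_k| ≥ ε. Define x_{k+1}^win = x_k + (ε³/2^k − ε)·x_k/|x_k|, and suppose that in the losing case the new position satisfies |x_{k+1}| ≤ |x_k| + ε. Then the conditional expectation of |x_{k+1}| given x_k (where each case occurs with probability 1/2) satisfies E[|x_{k+1}|] ≤ |x_k| + ε³/2^{k+1}. Consequently, the sequence N_k = |x_k| + ε³/2^k is a supermartingale under the 'point to the origin' strategy. -/

import Mathlib

theorem norm_add_smul_normalize_eq {E : Type*} [NormedAddCommGroup E] [NormedSpace ℝ E]
    {x : E} (hx : x ≠ 0) {t : ℝ} (ht : -‖x‖ ≤ t) :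
    ‖x + t • (‖x‖⁻¹ • x)‖ = ‖x‖ + t := by
  have hx₀ : 0 < ‖x‖ := norm_pos_iff.mpr hx
  have hrescale : x + t • (‖x‖⁻¹ • x) = ((‖x‖ + t) / ‖x‖) • x := by
    rw [smul_smul, add_div, div_self hx₀.ne', ← div_eq_mul_inv, add_smul, one_smul]
  rw [hrescale, norm_smul, Real.norm_of_nonneg (div_nonneg (by linarith) hx₀.le),
    div_mul_cancel₀ _ hx₀.ne']

/-- In the Tug-of-War game with the "point to the origin" strategy,
if `‖xk‖ ≥ ε` and the winner of the coin toss moves to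
`xk + (ε³/2^k − ε) • xk/‖xk‖` while in the losing case the new position `xlose`
satisfies `‖xlose‖ ≤ ‖xk‖ + ε`, then the conditional expectation (each case with
probability 1/2) of the norm of the new position is at most `‖xk‖ + ε³/2^(k+1)`;
consequently `N_k = ‖x_k‖ + ε³/2^k` is a supermartingale:
the expected value of `N_{k+1}` is at most `N_k`. -/
theorem tug_of_war_point_to_origin_supermartingale
    {N : ℕ} (ε : ℝ) (hε : 0 < ε) (k : ℕ)
    (xk xwin xlose : EuclideanSpace ℝ (Fin N))
    (hxk : ε ≤ ‖xk‖)
    (hwin : xwin = xk + (ε ^ 3 / 2 ^ k - ε) • (‖xk‖⁻¹ • xk))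
    (hlose : ‖xlose‖ ≤ ‖xk‖ + ε) :
    (1 / 2) * ‖xwin‖ + (1 / 2) * ‖xlose‖ ≤ ‖xk‖ + ε ^ 3 / 2 ^ (k + 1) ∧
    (1 / 2) * (‖xwin‖ + ε ^ 3 / 2 ^ (k + 1)) + (1 / 2) * (‖xlose‖ + ε ^ 3 / 2 ^ (k + 1))
      ≤ ‖xk‖ + ε ^ 3 / 2 ^ k := by
  have hxk₀ : xk ≠ 0 := norm_pos_iff.mp (hε.trans_le hxk)
  have hhalf : ε ^ 3 / 2 ^ k = 2 * (ε ^ 3 / 2 ^ (k + 1)) := by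
    rw [pow_succ]; ring
  have hbonus : 0 < ε ^ 3 / 2 ^ k := by positivity
  have hwin_norm : ‖xwin‖ = ‖xk‖ + (ε ^ 3 / 2 ^ k - ε) := by
    rw [hwin]
    exact norm_add_smul_normalize_eq hxk₀ (by linarith)
  have hexpect : (1 / 2) * ‖xwin‖ + (1 / 2) * ‖xlose‖ ≤ ‖xk‖ + ε ^ 3 / 2 ^ (k + 1) := by
    rw [hwin_norm]; linarith
  exact ⟨hexpect, by linarith⟩
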